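/- arXiv:2002.06310 — 2 statements merged into one kernel-verified Lean document; each statement's English description precedes it below -/
import Mathlib

section
/- Let x = p/q ∈ (0,1) be rational with gcd(p,q) = 1 and q > 0, and let T be the odd-odd continued fraction map. If p and q are both odd, then there exists an integer N ≥ 1 with T^N(x) = 1. If p + q is odd, then there exists an integer N ≥ 1 with T^N(x) = 0. -/
/-!
For integers `0 ≤ p < q`, put `d = q - p` and `r = q % d`. Then `⌊1/(1 - p/q)⌋ = q / d` and the
two branches of `T` give `T (p/q) = min r (d - r) / max r (d - r)`: a fraction whose numerator and
denominator add up to `d`, so its denominator is smaller than `q` as soon as `p > 0`. If `p` and `q`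
are odd then `d` is even and `r`, `d - r` are odd; if `p + q` is odd then so is `d`. Descending on
the denominator, the first case ends at a fraction `p/p = 1`, the second at `0/q = 0`.
-/

/-- The odd-odd continued fraction map on `[0,1]`.  For `x ∈ [(k-1)/k, k/(k+1))` with `k ≥ 1`
one has `k = ⌊1/(1-x)⌋`, and the two branches are separated by `(2k-1)/(2k+1)`. -/
noncomputable def oocfT (x : ℝ) : ℝ :=
  if x = 1 then 1
  else if x < (2 * (⌊1 / (1 - x)⌋ : ℝ) - 1) / (2 * (⌊1 / (1 - x)⌋ : ℝ) + 1) then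
    ((⌊1 / (1 - x)⌋ : ℝ) * x - ((⌊1 / (1 - x)⌋ : ℝ) - 1)) /
      ((⌊1 / (1 - x)⌋ : ℝ) - ((⌊1 / (1 - x)⌋ : ℝ) + 1) * x)
  else
    ((⌊1 / (1 - x)⌋ : ℝ) - ((⌊1 / (1 - x)⌋ : ℝ) + 1) * x) /
      ((⌊1 / (1 - x)⌋ : ℝ) * x - ((⌊1 / (1 - x)⌋ : ℝ) - 1))

lemma oocfT_one : oocfT 1 = 1 := if_pos rfl

lemma oocfT_zero : oocfT 0 = 0 := by norm_num [oocfT]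

lemma oocfT_eq_min_div_max {x : ℝ} {k : ℤ} (hx : x ≠ 1) (hk : ⌊1 / (1 - x)⌋ = k) (hk₀ : 0 ≤ k) :
    oocfT x =
      min (k * x - (k - 1)) (k - (k + 1) * x) / max (k * x - (k - 1)) (k - (k + 1) * x) := by
  have h2k : (0 : ℝ) < 2 * k + 1 := by positivity
  have hbranch : x < (2 * k - 1) / (2 * k + 1) ↔ k * x - (k - 1) < k - (k + 1) * x := by
    rw [lt_div_iff₀ h2k]
    constructor <;> intro h <;> linarith
  rw [oocfT, if_neg hx, hk]
  split_ifs with h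
  · have h := (hbranch.1 h).le
    rw [min_eq_left h, max_eq_right h]
  · have h := le_of_not_gt (mt hbranch.2 h)
    rw [min_eq_right h, max_eq_left h]

lemma oocfT_intCast_div {p q : ℤ} (hp : 0 ≤ p) (hpq : p < q) :
    oocfT (p / q) = ((min (q % (q - p)) (q - p - q % (q - p)) : ℤ) : ℝ) /
      ((max (q % (q - p)) (q - p - q % (q - p)) : ℤ) : ℝ) := by
  set d := q - p with hd_def
  set k := q / d
  have hd : 0 < d := by omega
  have hqR : (0 : ℝ) < q := by exact_mod_cast hp.trans_lt hpq
  have hdR : (0 : ℝ) < d := by exact_mod_cast hd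
  have hx : (p : ℝ) / q ≠ 1 := ((div_lt_one hqR).2 (by exact_mod_cast hpq)).ne
  have hk : ⌊1 / (1 - (p : ℝ) / q)⌋ = k := by
    have : 1 / (1 - (p : ℝ) / q) = q / d := by
      rw [hd_def]; push_cast; field_simp
    rw [this, Int.floor_eq_iff, le_div_iff₀ hdR, div_lt_iff₀ hdR]
    exact ⟨mod_cast Int.ediv_mul_le q hd.ne', mod_cast Int.lt_ediv_add_one_mul_self q hd⟩
  have hk₀ : 0 ≤ k := Int.ediv_nonneg (hp.trans hpq.le) hd.le
  have hr : q % d = q - d * k := Int.emod_def q d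
  rw [oocfT_eq_min_div_max hx hk hk₀, Int.cast_min, Int.cast_max, hr]
  have hu : k * ((p : ℝ) / q) - (k - 1) = ((q - d * k : ℤ) : ℝ) / q := by
    rw [hd_def]; push_cast; field_simp; ring
  have hv : k - (k + 1) * ((p : ℝ) / q) = ((d - (q - d * k) : ℤ) : ℝ) / q := by
    rw [hd_def]; push_cast; field_simp; ring
  rw [hu, hv, min_div_div_right hqR.le, max_div_div_right hqR.le,
    div_div_div_cancel_right₀ hqR.ne']

theorem exists_iterate_oocfT_eq_zero {p q : ℤ} (hp : 0 ≤ p) (hpq : p < q) (hodd : Odd (p + q)) :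
    ∃ N : ℕ, oocfT^[N] (p / q) = 0 := by
  rcases hp.eq_or_lt with rfl | hp
  · exact ⟨0, by simp⟩
  set d := q - p
  set r := q % d
  have hd : 0 < d := by omega
  have hr : 0 ≤ r ∧ r < d := ⟨Int.emod_nonneg q hd.ne', Int.emod_lt_of_pos q hd⟩
  have hsum : Odd (min r (d - r) + max r (d - r)) := by
    rw [min_add_max, add_sub_cancel, show d = p + q - 2 * p by ring]
    exact hodd.sub_even (even_two_mul p)
  have hlt : min r (d - r) < max r (d - r) := by
    refine min_le_max.lt_of_ne fun h => ?_
    rw [h, ← two_mul] at hsum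
    exact Int.not_odd_iff_even.2 (even_two_mul _) hsum
  obtain ⟨N, hN⟩ := exists_iterate_oocfT_eq_zero (le_min hr.1 (by omega)) hlt hsum
  exact ⟨N + 1, by rw [Function.iterate_succ_apply, oocfT_intCast_div hp.le hpq, hN]⟩
termination_by q.toNat
decreasing_by simp only [d, r] at hr; omega

theorem exists_iterate_oocfT_eq_one {p q : ℤ} (hp : 0 < p) (hpq : p ≤ q) (hpodd : Odd p)
    (hqodd : Odd q) : ∃ N : ℕ, oocfT^[N] (p / q) = 1 := by
  rcases hpq.eq_or_lt with rfl | hpq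
  · exact ⟨0, div_self (by exact_mod_cast hp.ne')⟩
  set d := q - p
  set r := q % d
  have hd : 0 < d := by omega
  have hr : 0 ≤ r ∧ r < d := ⟨Int.emod_nonneg q hd.ne', Int.emod_lt_of_pos q hd⟩
  have hdeven : Even d := hqodd.sub_odd hpodd
  have hrodd : Odd r := by
    rw [Int.odd_iff, Int.emod_emod_of_dvd _ (even_iff_two_dvd.1 hdeven)]
    exact Int.odd_iff.1 hqodd
  have hdrodd : Odd (d - r) := hdeven.sub_odd hrodd
  have hmin : Odd (min r (d - r)) := by
    rcases min_choice r (d - r) with h | h <;> rw [h] <;> assumption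
  have hmax : Odd (max r (d - r)) := by
    rcases max_choice r (d - r) with h | h <;> rw [h] <;> assumption
  have hr₀ : 0 < r := by obtain ⟨m, hm⟩ := hrodd; omega
  obtain ⟨N, hN⟩ := exists_iterate_oocfT_eq_one (lt_min hr₀ (by omega)) min_le_max hmin hmax
  exact ⟨N + 1, by rw [Function.iterate_succ_apply, oocfT_intCast_div hp.le hpq, hN]⟩
termination_by q.toNat
decreasing_by simp only [d, r] at hr; omega

theorem oocfT_rational_orbit_general
    (p q : ℤ) (hq : 0 < q)
    (hx : (p : ℝ) / (q : ℝ) ∈ Set.Ioo (0 : ℝ) 1) :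
    (Odd p → Odd q → ∃ N : ℕ, 1 ≤ N ∧ oocfT^[N] ((p : ℝ) / (q : ℝ)) = 1) ∧
      (Odd (p + q) → ∃ N : ℕ, 1 ≤ N ∧ oocfT^[N] ((p : ℝ) / (q : ℝ)) = 0) := by
  have hqR : (0 : ℝ) < q := by exact_mod_cast hq
  have hp : 0 < p := by exact_mod_cast (div_pos_iff_of_pos_right hqR).1 hx.1
  have hpq : p < q := by exact_mod_cast (div_lt_one hqR).1 hx.2
  refine ⟨fun hpodd hqodd => ?_, fun hodd => ?_⟩
  · obtain ⟨N, hN⟩ := exists_iterate_oocfT_eq_one hp hpq.le hpodd hqodd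
    exact ⟨N + 1, Nat.le_add_left 1 N, by rw [Function.iterate_succ_apply', hN, oocfT_one]⟩
  · obtain ⟨N, hN⟩ := exists_iterate_oocfT_eq_zero hp.le hpq hodd
    exact ⟨N + 1, Nat.le_add_left 1 N, by rw [Function.iterate_succ_apply', hN, oocfT_zero]⟩

/-- For a rational `p/q ∈ (0,1)` in lowest terms: if `p` and `q` are both odd then some
iterate of the odd-odd continued fraction map sends `p/q` to `1`; if `p + q` is odd then
some iterate sends `p/q` to `0`. -/
theorem oocfT_rational_orbit
    (p q : ℤ) (hq : 0 < q) (hcop : IsCoprime p q)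
    (hx : (p : ℝ) / (q : ℝ) ∈ Set.Ioo (0 : ℝ) 1) :
    (Odd p → Odd q → ∃ N : ℕ, 1 ≤ N ∧ oocfT^[N] ((p : ℝ) / (q : ℝ)) = 1) ∧
      (Odd (p + q) → ∃ N : ℕ, 1 ≤ N ∧ oocfT^[N] ((p : ℝ) / (q : ℝ)) = 0) :=
  oocfT_rational_orbit_general p q hq hx
end

section
/- For every irrational x ∈ (0,1) and every integer k ≥ 1, the k-th principal convergent p_k/q_k of the odd-odd continued fraction of x is an intermediate convergent of the regular continued fraction of x: there exist an integer n ≥ 1 and an integer j with 1 ≤ j ≤ d_n such that p_k·(q^R_{n−2} + j·q^R_{n−1}) = q_k·(p^R_{n−2} + j·p^R_{n−1}). -/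
/-- OOCF partial quotient `a` of a point `y`: `a = k+1` if `y` is in the lower branch
interval `((k-1)/k, (2k-1)/(2k+1))`, and `a = k` if `y ∈ ((2k-1)/(2k+1), k/(k+1))`,
where `k = ⌊1/(1-y)⌋`. -/
noncomputable def oocfA (y : ℝ) : ℤ :=
  if y < (2 * (⌊1 / (1 - y)⌋ : ℝ) - 1) / (2 * (⌊1 / (1 - y)⌋ : ℝ) + 1) then ⌊1 / (1 - y)⌋ + 1
  else ⌊1 / (1 - y)⌋

/-- OOCF partial quotient `ε` of a point `y`: `ε = -1` on the lower branch interval and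
`ε = 1` on the upper one. -/
noncomputable def oocfE (y : ℝ) : ℤ :=
  if y < (2 * (⌊1 / (1 - y)⌋ : ℝ) - 1) / (2 * (⌊1 / (1 - y)⌋ : ℝ) + 1) then -1 else 1

/-- The OOCF convergents `(p'_n, q'_n, p_n, q_n)` of `x`, defined by
`p'_0 = 1, q'_0 = 0, p_0 = 1, q_0 = 1` and
`p'_n = a_n p_{n-1} - p'_{n-1}`, `q'_n = a_n q_{n-1} - q'_{n-1}`,
`p_n = 2 p'_n + ε_n p_{n-1}`, `q_n = 2 q'_n + ε_n q_{n-1}`,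
where `(a_n, ε_n)` are the partial quotients of `x`, i.e. `a_n = oocfA (oocfT^[n-1] x)`,
`ε_n = oocfE (oocfT^[n-1] x)`. -/
noncomputable def oocfConv (x : ℝ) : ℕ → ℤ × ℤ × ℤ × ℤ
  | 0 => (1, 0, 1, 1)
  | n + 1 =>
    let c := oocfConv x n
    (oocfA (oocfT^[n] x) * c.2.2.1 - c.1,
     oocfA (oocfT^[n] x) * c.2.2.2 - c.2.1,
     2 * (oocfA (oocfT^[n] x) * c.2.2.1 - c.1) + oocfE (oocfT^[n] x) * c.2.2.1,
     2 * (oocfA (oocfT^[n] x) * c.2.2.2 - c.2.1) + oocfE (oocfT^[n] x) * c.2.2.2)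

/-- `n`-th sub-convergent numerator `p'_n`. -/
noncomputable def oocfP' (x : ℝ) (n : ℕ) : ℤ := (oocfConv x n).1

/-- `n`-th sub-convergent denominator `q'_n`. -/
noncomputable def oocfQ' (x : ℝ) (n : ℕ) : ℤ := (oocfConv x n).2.1

/-- `n`-th principal convergent numerator `p_n`. -/
noncomputable def oocfP (x : ℝ) (n : ℕ) : ℤ := (oocfConv x n).2.2.1

/-- `n`-th principal convergent denominator `q_n`. -/
noncomputable def oocfQ (x : ℝ) (n : ℕ) : ℤ := (oocfConv x n).2.2.2

/-- `n`-th pseudo-convergent numerator: `p''_n = p'_n + ε_n p_{n-1}` for `n ≥ 1`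
(with the convention `p''_0 = 0`). -/
noncomputable def oocfP'' (x : ℝ) : ℕ → ℤ
  | 0 => 0
  | n + 1 => oocfP' x (n + 1) + oocfE (oocfT^[n] x) * oocfP x n

/-- `n`-th pseudo-convergent denominator: `q''_n = q'_n + ε_n q_{n-1}` for `n ≥ 1`
(with the convention `q''_0 = 1`). -/
noncomputable def oocfQ'' (x : ℝ) : ℕ → ℤ
  | 0 => 1
  | n + 1 => oocfQ' x (n + 1) + oocfE (oocfT^[n] x) * oocfQ x n

/-- The Gauss map. -/
noncomputable def gauss (x : ℝ) : ℝ := if x = 0 then 0 else Int.fract (1 / x)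

/-- The regular continued fraction partial quotient `d_{n+1}(x) = ⌊1 / G^n(x)⌋`. -/
noncomputable def rcfD (x : ℝ) (n : ℕ) : ℤ := ⌊1 / (gauss^[n] x)⌋

/-- RCF convergents, with index shifted by one: `rcfPQ x (n+1) = (p^R_n, q^R_n)`,
so `rcfPQ x 0 = (p^R_{-1}, q^R_{-1}) = (1,0)`, `rcfPQ x 1 = (p^R_0, q^R_0) = (0,1)` and
`p^R_n = d_n p^R_{n-1} + p^R_{n-2}`, `q^R_n = d_n q^R_{n-1} + q^R_{n-2}`. -/
noncomputable def rcfPQ (x : ℝ) : ℕ → ℤ × ℤ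
  | 0 => (1, 0)
  | 1 => (0, 1)
  | n + 2 =>
    (rcfD x n * (rcfPQ x (n + 1)).1 + (rcfPQ x n).1,
     rcfD x n * (rcfPQ x (n + 1)).2 + (rcfPQ x n).2)


/-! The OOCF convergent matrix `[[p'_n, p''_n], [q'_n, q''_n]]` is the product of the step matrices
`[[a - 1, a - 1 + ε], [a, a + ε]]`, which have non-negative entries and determinant `-ε`, and
`x = (p'_n t + p''_n) / (q'_n t + q''_n)` with `t = T^n x ∈ (0,1)`. Hence `p''_n/q''_n` and `p'_n/q'_n`
are Farey neighbours bracketing `x`, and `p_n/q_n` is their mediant.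

The mediant of two Farey neighbours bracketing an irrational `x ∈ (0,1)` lies on the Stern–Brocot
path of `x`, i.e. it is an intermediate RCF convergent. Applying `y ↦ 1/y - ⌊1/y⌋` to `x` and to the
bracketing pair shrinks the pair, unless the integer `⌊1/x⌋` separates the inverted neighbours; by the
Farey property that happens only for the pair `0/1, 1/v'`, whose mediant is `1/(1 + v')`. -/

open Set

/-- `p/q = (p^R_{m-1} + j p^R_m)/(q^R_{m-1} + j q^R_m)` with `1 ≤ j ≤ d_{m+1}`, where `m` is the
`n - 1` of the final theorem. -/
def IsRcfIntermediate (x : ℝ) (p q : ℤ) : Prop :=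
  ∃ m : ℕ, ∃ j : ℤ, 1 ≤ j ∧ j ≤ rcfD x m ∧
    p * ((rcfPQ x m).2 + j * (rcfPQ x (m + 1)).2) = q * ((rcfPQ x m).1 + j * (rcfPQ x (m + 1)).1)

section Gauss

variable {x : ℝ}

lemma gauss_of_ne_zero (hx : x ≠ 0) : gauss x = 1 / x - rcfD x 0 := by
  rw [gauss, if_neg hx, ← Int.self_sub_floor]
  simp [rcfD]

lemma irrational_gauss (hirr : Irrational x) : Irrational (gauss x) := by
  rw [gauss_of_ne_zero hirr.ne_zero, one_div]
  exact hirr.inv.sub_intCast _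

lemma gauss_mem_Ioo (hirr : Irrational x) : gauss x ∈ Ioo 0 1 := by
  have hne := (irrational_gauss hirr).ne_zero
  rw [gauss, if_neg hirr.ne_zero] at hne ⊢
  exact ⟨(Int.fract_nonneg _).lt_of_ne' hne, Int.fract_lt_one _⟩

lemma one_le_rcfD_zero (hx : x ∈ Ioo 0 1) : 1 ≤ rcfD x 0 := by
  have : (1 : ℝ) ≤ 1 / x := by rw [le_div_iff₀ hx.1]; linarith [hx.2]
  simpa [rcfD, Int.le_floor] using this

lemma rcfD_zero_mul_le_one (hx : 0 < x) : rcfD x 0 * x ≤ 1 := by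
  have := Int.floor_le (1 / x)
  rw [le_div_iff₀ hx] at this
  simpa [rcfD] using this

lemma mul_gauss_add_rcfD_zero_mul (hx : x ≠ 0) : x * gauss x + rcfD x 0 * x = 1 := by
  rw [gauss_of_ne_zero hx, mul_sub, mul_one_div_cancel hx]
  ring

lemma sub_rcfD_zero_mul_lt_mul_gauss (hx : 0 < x) {u v : ℤ} (h : v * x < u) :
    ((v - rcfD x 0 * u : ℤ) : ℝ) < u * gauss x := by
  refine lt_of_mul_lt_mul_right ?_ hx.le
  push_cast
  linear_combination h - u * mul_gauss_add_rcfD_zero_mul hx.ne'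

lemma mul_gauss_lt_sub_rcfD_zero_mul (hx : 0 < x) {u v : ℤ} (h : u < v * x) :
    u * gauss x < ((v - rcfD x 0 * u : ℤ) : ℝ) := by
  refine lt_of_mul_lt_mul_right ?_ hx.le
  push_cast
  linear_combination h + u * mul_gauss_add_rcfD_zero_mul hx.ne'

lemma rcfD_succ (x : ℝ) (n : ℕ) : rcfD x (n + 1) = rcfD (gauss x) n := by
  simp only [rcfD, Function.iterate_succ_apply]

lemma rcfPQ_succ (x : ℝ) (m : ℕ) :
    rcfPQ x (m + 1) =
      ((rcfPQ (gauss x) m).2, rcfD x 0 * (rcfPQ (gauss x) m).2 + (rcfPQ (gauss x) m).1) := by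
  induction m using Nat.twoStepInduction with
  | zero => simp [rcfPQ]
  | one => simp [rcfPQ]
  | more m ih₁ ih₂ =>
    rw [rcfPQ.eq_3 x (m + 1), rcfPQ.eq_3 (gauss x) m, ih₁, ih₂, rcfD_succ]
    ext <;> ring

end Gauss

section Intermediate

variable {x : ℝ}

lemma isRcfIntermediate_one {j : ℤ} (hj : 1 ≤ j) (hjd : j ≤ rcfD x 0) :
    IsRcfIntermediate x 1 j :=
  ⟨0, j, hj, hjd, by simp [rcfPQ]⟩

lemma IsRcfIntermediate.of_gauss {p q : ℤ} (h : IsRcfIntermediate (gauss x) p q) :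
    IsRcfIntermediate x q (rcfD x 0 * q + p) := by
  obtain ⟨m, j, hj, hjd, heq⟩ := h
  refine ⟨m + 1, j, hj, by rwa [rcfD_succ], ?_⟩
  rw [rcfPQ_succ, rcfPQ_succ]
  linear_combination -heq

lemma farey_neighbors_no_int_between {a b c d n : ℤ} (hb : 1 ≤ b) (hd : 1 ≤ d)
    (hdet : b * c - a * d = 1) (hlo : a < n * b) (hhi : n * d < c) : False := by
  nlinarith

theorem isRcfIntermediate_mediant (hirr : Irrational x) (hx : x ∈ Ioo 0 1)
    {u v u' v' : ℤ} (hu : 0 ≤ u) (hv' : 0 ≤ v') (hdet : u' * v - u * v' = 1)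
    (hlo : u < v * x) (hhi : v' * x < u') :
    IsRcfIntermediate x (u + u') (v + v') := by
  induction hN : (u + v + u' + v').toNat using Nat.strong_induction_on
    generalizing x u v u' v' with
  | _ N ih =>
  have hu' : 1 ≤ u' := by
    have : (0 : ℝ) < u' := (mul_nonneg (by exact_mod_cast hv') hx.1.le).trans_lt hhi
    exact_mod_cast this
  have hv : 1 ≤ v := by
    have : (0 : ℝ) < v * x := (by exact_mod_cast hu : (0 : ℝ) ≤ u).trans_lt hlo
    exact_mod_cast pos_of_mul_pos_left this hx.1.le
  set d := rcfD x 0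
  have hd : 1 ≤ d := one_le_rcfD_zero hx
  by_cases hrec : d * u' ≤ v'
  · -- the inverted pair `(v' - d u')/u' < 1/x - d < (v - d u)/u` brackets `gauss x`
    have hlt : (v' - d * u' + u' + (v - d * u) + u).toNat < N := by
      have : u' ≤ d * u' := le_mul_of_one_le_left (by omega) hd
      have : u ≤ d * u := le_mul_of_one_le_left hu hd
      omega
    have := (ih _ hlt (irrational_gauss hirr) (gauss_mem_Ioo hirr)
      (u := v' - d * u') (v := u') (u' := v - d * u) (v' := u) (by omega) hu
      (by linear_combination hdet) (sub_rcfD_zero_mul_lt_mul_gauss hx.1 hhi)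
      (mul_gauss_lt_sub_rcfD_zero_mul hx.1 hlo) rfl).of_gauss
    convert this using 1 <;> ring
  · have hu0 : u = 0 := by
      by_contra hne
      have hdu : (d * u : ℤ) < v := by
        have : (d : ℝ) * u * x < v * x :=
          calc (d : ℝ) * u * x = u * (d * x) := by ring
            _ ≤ u := mul_le_of_le_one_right (by exact_mod_cast hu) (rcfD_zero_mul_le_one hx.1)
            _ < v * x := hlo
        exact_mod_cast lt_of_mul_lt_mul_right this hx.1.le
      exact farey_neighbors_no_int_between hu' (by omega) (by linear_combination hdet)
        (not_le.mp hrec) hdu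
    subst hu0
    have hu'1 : u' = 1 := Int.eq_one_of_mul_eq_one_right (by omega) (by simpa using hdet)
    subst hu'1
    rw [zero_add]
    exact isRcfIntermediate_one (by omega) (by omega)

end Intermediate

section OocfStep

variable {y : ℝ}

lemma one_le_floor_one_div_one_sub (hy : y ∈ Ico 0 1) : 1 ≤ ⌊1 / (1 - y)⌋ := by
  rw [Int.le_floor, Int.cast_one, le_div_iff₀ (by linarith [hy.2])]
  linarith [hy.1]

lemma one_le_oocfA (hy : y ∈ Ico 0 1) : 1 ≤ oocfA y := by
  have := one_le_floor_one_div_one_sub hy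
  unfold oocfA
  split_ifs <;> omega

lemma one_le_oocfA_add_oocfE (hy : y ∈ Ico 0 1) : 1 ≤ oocfA y + oocfE y := by
  have := one_le_floor_one_div_one_sub hy
  unfold oocfA oocfE
  split_ifs <;> omega

lemma isUnit_oocfE (y : ℝ) : IsUnit (oocfE y) := by
  unfold oocfE
  split_ifs <;> simp

lemma floor_one_div_one_sub_bounds (hirr : Irrational y) (hy : y ∈ Ioo 0 1) :
    (⌊1 / (1 - y)⌋ : ℝ) - 1 < ⌊1 / (1 - y)⌋ * y ∧ ((⌊1 / (1 - y)⌋ : ℝ) + 1) * y < ⌊1 / (1 - y)⌋ := by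
  have hk1 := one_le_floor_one_div_one_sub (Ioo_subset_Ico_self hy)
  set k := ⌊1 / (1 - y)⌋
  have h1y : 0 < 1 - y := by linarith [hy.2]
  constructor
  · have := (le_div_iff₀ h1y).mp (Int.floor_le (1 / (1 - y)))
    refine lt_of_le_of_ne (by linarith) fun heq => hirr ⟨((k : ℚ) - 1) / k, ?_⟩
    have : (k : ℝ) ≠ 0 := by exact_mod_cast (by omega : k ≠ 0)
    push_cast
    field_simp
    linarith
  · have := (div_lt_iff₀ h1y).mp (Int.lt_floor_add_one (1 / (1 - y)))
    linarith

lemma oocfT_mem_Ioo_and_moebius (hirr : Irrational y) (hy : y ∈ Ioo 0 1) :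
    oocfT y ∈ Ioo 0 1 ∧
      y * (oocfA y * oocfT y + (oocfA y + oocfE y)) =
        (oocfA y - 1) * oocfT y + (oocfA y - 1 + oocfE y) := by
  have hk1 := one_le_floor_one_div_one_sub (Ioo_subset_Ico_self hy)
  obtain ⟨hlo, hhi⟩ := floor_one_div_one_sub_bounds hirr hy
  unfold oocfT oocfA oocfE
  rw [if_neg hy.2.ne]
  set k := ⌊1 / (1 - y)⌋
  have hN : 0 < (k : ℝ) * y - (k - 1) := by linarith
  have hD : 0 < (k : ℝ) - (k + 1) * y := by linarith
  have h2k : (0 : ℝ) < 2 * k + 1 := by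
    have : (1 : ℝ) ≤ k := by exact_mod_cast hk1
    linarith
  split_ifs with hbranch
  · rw [lt_div_iff₀ h2k] at hbranch
    refine ⟨⟨div_pos hN hD, (div_lt_one hD).mpr (by linarith)⟩, ?_⟩
    push_cast
    linear_combination -div_mul_cancel₀ ((k : ℝ) * y - (k - 1)) hD.ne'
  · have hbranch' : (2 * k - 1 : ℝ) < (2 * k + 1) * y := by
      refine lt_of_le_of_ne (by rw [not_lt, div_le_iff₀ h2k] at hbranch; linarith) fun heq => ?_
      exact hirr ⟨(2 * k - 1) / (2 * k + 1), by push_cast; field_simp; linarith⟩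
    refine ⟨⟨div_pos hD hN, (div_lt_one hN).mpr (by linarith)⟩, ?_⟩
    push_cast
    linear_combination div_mul_cancel₀ ((k : ℝ) - (k + 1) * y) hN.ne'

lemma irrational_of_moebius {t : ℝ} {a b c d : ℤ} (hirr : Irrational y)
    (hden : (c : ℝ) * t + d ≠ 0) (h : y * (c * t + d) = a * t + b) : Irrational t := by
  rintro ⟨r, rfl⟩
  refine hirr ⟨(a * r + b) / (c * r + d), ?_⟩
  push_cast
  rw [div_eq_iff hden, h]

lemma irrational_oocfT (hirr : Irrational y) (hy : y ∈ Ioo 0 1) : Irrational (oocfT y) := by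
  obtain ⟨hT, hmul⟩ := oocfT_mem_Ioo_and_moebius hirr hy
  have ha : (1 : ℝ) ≤ oocfA y := by exact_mod_cast one_le_oocfA (Ioo_subset_Ico_self hy)
  have hae : (1 : ℝ) ≤ ((oocfA y + oocfE y : ℤ) : ℝ) := by
    exact_mod_cast one_le_oocfA_add_oocfE (Ioo_subset_Ico_self hy)
  refine irrational_of_moebius (a := oocfA y - 1) (b := oocfA y - 1 + oocfE y) (c := oocfA y)
    (d := oocfA y + oocfE y) hirr
    (add_pos (mul_pos (by linarith) hT.1) (by linarith)).ne' ?_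
  push_cast
  exact hmul

end OocfStep

section OocfConvergents

variable {x : ℝ}

lemma oocfT_iterate_mem_Ioo (hirr : Irrational x) (hx : x ∈ Ioo 0 1) (n : ℕ) :
    Irrational (oocfT^[n] x) ∧ oocfT^[n] x ∈ Ioo 0 1 := by
  induction n with
  | zero => exact ⟨hirr, hx⟩
  | succ n ih =>
    rw [Function.iterate_succ_apply']
    exact ⟨irrational_oocfT ih.1 ih.2, (oocfT_mem_Ioo_and_moebius ih.1 ih.2).1⟩

variable (x) (n : ℕ)

lemma oocfP_eq_add : oocfP x n = oocfP' x n + oocfP'' x n := by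
  cases n with
  | zero => rfl
  | succ n =>
    simp only [oocfP'', oocfP, oocfP', oocfConv]
    ring

lemma oocfQ_eq_add : oocfQ x n = oocfQ' x n + oocfQ'' x n := by
  cases n with
  | zero => rfl
  | succ n =>
    simp only [oocfQ'', oocfQ, oocfQ', oocfConv]
    ring

lemma oocfP'_succ : oocfP' x (n + 1) =
    (oocfA (oocfT^[n] x) - 1) * oocfP' x n + oocfA (oocfT^[n] x) * oocfP'' x n := by
  rw [show oocfP' x (n + 1) = oocfA (oocfT^[n] x) * oocfP x n - oocfP' x n from rfl, oocfP_eq_add]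
  ring

lemma oocfQ'_succ : oocfQ' x (n + 1) =
    (oocfA (oocfT^[n] x) - 1) * oocfQ' x n + oocfA (oocfT^[n] x) * oocfQ'' x n := by
  rw [show oocfQ' x (n + 1) = oocfA (oocfT^[n] x) * oocfQ x n - oocfQ' x n from rfl, oocfQ_eq_add]
  ring

lemma oocfP''_succ : oocfP'' x (n + 1) =
    (oocfA (oocfT^[n] x) - 1 + oocfE (oocfT^[n] x)) * oocfP' x n +
      (oocfA (oocfT^[n] x) + oocfE (oocfT^[n] x)) * oocfP'' x n := by
  rw [oocfP'', oocfP'_succ, oocfP_eq_add]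
  ring

lemma oocfQ''_succ : oocfQ'' x (n + 1) =
    (oocfA (oocfT^[n] x) - 1 + oocfE (oocfT^[n] x)) * oocfQ' x n +
      (oocfA (oocfT^[n] x) + oocfE (oocfT^[n] x)) * oocfQ'' x n := by
  rw [oocfQ'', oocfQ'_succ, oocfQ_eq_add]
  ring

lemma isUnit_oocf_det : IsUnit (oocfP' x n * oocfQ'' x n - oocfP'' x n * oocfQ' x n) := by
  induction n with
  | zero => exact isUnit_one
  | succ n ih =>
    have hdet : oocfP' x (n + 1) * oocfQ'' x (n + 1) - oocfP'' x (n + 1) * oocfQ' x (n + 1) =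
        -oocfE (oocfT^[n] x) * (oocfP' x n * oocfQ'' x n - oocfP'' x n * oocfQ' x n) := by
      rw [oocfP'_succ, oocfQ'_succ, oocfP''_succ, oocfQ''_succ]
      ring
    rw [hdet]
    exact (isUnit_oocfE _).neg.mul ih

variable {x}

lemma oocf_entries_nonneg (hirr : Irrational x) (hx : x ∈ Ioo 0 1) :
    0 ≤ oocfP' x n ∧ 0 ≤ oocfP'' x n ∧ 0 ≤ oocfQ' x n ∧ 0 ≤ oocfQ'' x n := by
  induction n with
  | zero => exact ⟨zero_le_one, le_rfl, le_rfl, zero_le_one⟩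
  | succ n ih =>
    obtain ⟨hp', hp'', hq', hq''⟩ := ih
    have hy := Ioo_subset_Ico_self (oocfT_iterate_mem_Ioo hirr hx n).2
    have ha := one_le_oocfA hy
    have hae := one_le_oocfA_add_oocfE hy
    rw [oocfP'_succ, oocfP''_succ, oocfQ'_succ, oocfQ''_succ]
    refine ⟨?_, ?_, ?_, ?_⟩ <;> apply add_nonneg <;> apply mul_nonneg <;> omega

lemma oocf_moebius (hirr : Irrational x) (hx : x ∈ Ioo 0 1) :
    x * (oocfQ' x n * oocfT^[n] x + oocfQ'' x n) = oocfP' x n * oocfT^[n] x + oocfP'' x n := by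
  induction n with
  | zero => simp [oocfP', oocfP'', oocfQ', oocfQ'', oocfConv]
  | succ n ih =>
    obtain ⟨hirr_n, hmem⟩ := oocfT_iterate_mem_Ioo hirr hx n
    have hstep := (oocfT_mem_Ioo_and_moebius hirr_n hmem).2
    rw [Function.iterate_succ_apply', oocfP'_succ, oocfP''_succ, oocfQ'_succ, oocfQ''_succ]
    push_cast
    linear_combination
      (oocfA (oocfT^[n] x) * oocfT (oocfT^[n] x) + (oocfA (oocfT^[n] x) + oocfE (oocfT^[n] x) : ℝ)) *
        ih + (oocfP' x n - x * oocfQ' x n) * hstep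

end OocfConvergents

lemma isRcfIntermediate_of_moebius {x t : ℝ} (hirr : Irrational x) (hx : x ∈ Ioo 0 1)
    {p' p'' q' q'' : ℤ} (hp' : 0 ≤ p') (hp'' : 0 ≤ p'') (hq' : 0 ≤ q') (hq'' : 0 ≤ q'')
    (hdet : IsUnit (p' * q'' - p'' * q')) (ht : 0 < t)
    (h : x * (q' * t + q'') = p' * t + p'') :
    IsRcfIntermediate x (p' + p'') (q' + q'') := by
  have hS : 0 ≤ (q' : ℝ) * t + q'' :=
    add_nonneg (mul_nonneg (by exact_mod_cast hq') ht.le) (by exact_mod_cast hq'')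
  have hupper : ((p' : ℝ) - q' * x) * (q' * t + q'') = (p' * q'' - p'' * q' : ℤ) := by
    push_cast
    linear_combination -(q' : ℝ) * h
  have hlower : ((q'' : ℝ) * x - p'') * (q' * t + q'') = t * (p' * q'' - p'' * q' : ℤ) := by
    push_cast
    linear_combination (q'' : ℝ) * h
  rcases Int.isUnit_iff.mp hdet with hD | hD
  · rw [hD] at hupper hlower
    push_cast at hupper hlower
    rw [add_comm p', add_comm q']
    exact isRcfIntermediate_mediant hirr hx hp'' hq' (by linear_combination hD)
      (by nlinarith) (by nlinarith)
  · rw [hD] at hupper hlower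
    push_cast at hupper hlower
    exact isRcfIntermediate_mediant hirr hx hp' hq'' (by linear_combination -hD)
      (by nlinarith) (by nlinarith)

theorem oocf_principal_convergent_is_intermediate_general
    (x : ℝ) (hx : x ∈ Set.Ioo (0 : ℝ) 1) (hirr : Irrational x)
    (k : ℕ) :
    ∃ n : ℕ, 1 ≤ n ∧ ∃ j : ℤ, 1 ≤ j ∧ j ≤ rcfD x (n - 1) ∧
      oocfP x k * ((rcfPQ x (n - 1)).2 + j * (rcfPQ x n).2) =
        oocfQ x k * ((rcfPQ x (n - 1)).1 + j * (rcfPQ x n).1) := by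
  obtain ⟨hp', hp'', hq', hq''⟩ := oocf_entries_nonneg k hirr hx
  obtain ⟨m, j, hj, hjd, heq⟩ : IsRcfIntermediate x (oocfP x k) (oocfQ x k) := by
    rw [oocfP_eq_add, oocfQ_eq_add]
    exact isRcfIntermediate_of_moebius hirr hx hp' hp'' hq' hq'' (isUnit_oocf_det x k)
      (oocfT_iterate_mem_Ioo hirr hx k).2.1 (oocf_moebius k hirr hx)
  exact ⟨m + 1, m.succ_pos, j, hj, hjd, heq⟩

/-- Every OOCF principal convergent `p_k/q_k` of an irrational `x ∈ (0,1)` is an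
intermediate convergent of the regular continued fraction of `x`: there are `n ≥ 1` and
`1 ≤ j ≤ d_n` with `p_k/q_k = (p^R_{n-2} + j p^R_{n-1})/(q^R_{n-2} + j q^R_{n-1})`
(recall `rcfPQ x m = (p^R_{m-1}, q^R_{m-1})`). -/
theorem oocf_principal_convergent_is_intermediate
    (x : ℝ) (hx : x ∈ Set.Ioo (0 : ℝ) 1) (hirr : Irrational x)
    (k : ℕ) (hk : 1 ≤ k) :
    ∃ n : ℕ, 1 ≤ n ∧ ∃ j : ℤ, 1 ≤ j ∧ j ≤ rcfD x (n - 1) ∧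
      oocfP x k * ((rcfPQ x (n - 1)).2 + j * (rcfPQ x n).2) =
        oocfQ x k * ((rcfPQ x (n - 1)).1 + j * (rcfPQ x n).1) :=
  oocf_principal_convergent_is_intermediate_general x hx hirr k
end
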